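/- arXiv:quant-ph/0009090 — 3 statements merged into one kernel-verified Lean document; each statement's English description precedes it below -/
import Mathlib

section
/- The minimum Frobenius distance from E_ψ to the set of pure product states on ℂ^N equals √(2(1 − |v_{j₀}|²)), where |v_{j₀}| = max_j |v_j|; that is, every pure product state A satisfies ‖E_ψ − A‖ ≥ √(2(1 − |v_{j₀}|²)), and this distance is attained by the pure product state S_ψ = |e_{j₀}⊗⋯⊗e_{j₀}⟩⟨e_{j₀}⊗⋯⊗e_{j₀}|. -/
open Matrix BigOperators ComplexOrder

noncomputable section

/-- The Frobenius inner product `⟨A, B⟩ = Tr(Aᴴ B)`. -/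
def frobInner {m : Type*} [Fintype m] (A B : Matrix m m ℂ) : ℂ :=
  (Aᴴ * B).trace

/-- The Frobenius norm associated to the Frobenius inner product. -/
def frobNorm {m : Type*} [Fintype m] (A : Matrix m m ℂ) : ℝ :=
  Real.sqrt (frobInner A A).re

/-- A state (density matrix): a positive semidefinite (Hermitian) matrix of trace one. -/
def IsState {m : Type*} [Fintype m] (M : Matrix m m ℂ) : Prop :=
  M.PosSemidef ∧ M.trace = 1

/-- A pure state: a rank-one orthogonal projection, i.e. a Hermitian idempotent of trace one. -/
def IsPureState {m : Type*} [Fintype m] (M : Matrix m m ℂ) : Prop :=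
  M.IsHermitian ∧ M * M = M ∧ M.trace = 1

/-- The Kronecker product of the matrices `A α`, realized on the tuple basis of the
tensor product `ℂ^{n 0} ⊗ ⋯ ⊗ ℂ^{n (p-1)} ≃ ℂ^N`, `N = ∏ α, n α`. -/
def prodMat {p : ℕ} {n : Fin p → ℕ} (A : ∀ α, Matrix (Fin (n α)) (Fin (n α)) ℂ) :
    Matrix (∀ α, Fin (n α)) (∀ α, Fin (n α)) ℂ :=
  fun j k => ∏ α, A α (j α) (k α)

/-- A pure product state: a Kronecker product of pure states on the factors. -/
def IsPureProductState {p : ℕ} {n : Fin p → ℕ}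
    (M : Matrix (∀ α, Fin (n α)) (∀ α, Fin (n α)) ℂ) : Prop :=
  ∃ A : ∀ α, Matrix (Fin (n α)) (Fin (n α)) ℂ,
    (∀ α, IsPureState (A α)) ∧ M = prodMat A

/-- A (fully) separable state: a finite convex combination of pure product states. -/
def IsSeparableState {p : ℕ} {n : Fin p → ℕ}
    (M : Matrix (∀ α, Fin (n α)) (∀ α, Fin (n α)) ℂ) : Prop :=
  ∃ (k : ℕ) (c : Fin k → ℝ) (P : Fin k → Matrix (∀ α, Fin (n α)) (∀ α, Fin (n α)) ℂ),
    (∀ i, 0 ≤ c i) ∧ (∑ i, c i) = 1 ∧ (∀ i, IsPureProductState (P i)) ∧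
      M = ∑ i, (c i : ℂ) • P i

/-- The vector `ψ = ∑ j, v j • (e j ⊗ ⋯ ⊗ e j)`, where `e j` is the `j`-th standard basis
vector of each factor (embedded via `n 0 ≤ n α`). -/
def psiVec {p : ℕ} {n : Fin (p + 2) → ℕ} (hn : Monotone n) (v : Fin (n 0) → ℂ) :
    (∀ α, Fin (n α)) → ℂ :=
  fun x => ∑ j : Fin (n 0), v j *
    ∏ α, (if x α = Fin.castLE (hn (Fin.zero_le α)) j then (1 : ℂ) else 0)

/-- The pure state `E_ψ = |ψ⟩⟨ψ|`. -/
def Epsi {p : ℕ} {n : Fin (p + 2) → ℕ} (hn : Monotone n) (v : Fin (n 0) → ℂ) :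
    Matrix (∀ α, Fin (n α)) (∀ α, Fin (n α)) ℂ :=
  fun x y => psiVec hn v x * star (psiVec hn v y)

/-- The pure product state `S_ψ = |e_{j₀} ⊗ ⋯ ⊗ e_{j₀}⟩⟨e_{j₀} ⊗ ⋯ ⊗ e_{j₀}|`. -/
def Spsi {p : ℕ} {n : Fin (p + 2) → ℕ} (hn : Monotone n) (j₀ : Fin (n 0)) :
    Matrix (∀ α, Fin (n α)) (∀ α, Fin (n α)) ℂ :=
  prodMat fun α => Matrix.single (Fin.castLE (hn (Fin.zero_le α)) j₀)
    (Fin.castLE (hn (Fin.zero_le α)) j₀) 1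

/-!
For pure states `‖E - A‖² = 2 - 2 Re ⟨E, A⟩`, so everything reduces to bounding the overlap.
With `D j = (j, …, j)`, `⟨E_ψ, A⟩ = ∑ j k, v̄ j · A (D j) (D k) · v k`. For `A = ⊗ B_α` with
pure factors, Cauchy–Schwarz in each factor gives `|A (D j) (D k)| ≤ w j · w k` where
`w j = ∏ α, √(B_α (j, j))`, hence `|⟨E_ψ, A⟩| ≤ (∑ j, |v j| w j)² ≤ |v j₀|² (∑ j, w j)²`.
Since there are at least two factors, `w j ≤ √(B_0 (j, j) · B_1 (j, j))`, which by AM-GM is at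
most the mean of the two diagonal entries; the diagonals of pure states sum to one, so
`∑ j, w j ≤ 1`. For `S_ψ` the overlap is exactly `|v j₀|²`.
-/

section PureState

variable {m : Type*} [Fintype m]

theorem frobInner_comm (A B : Matrix m m ℂ) : frobInner A B = star (frobInner B A) := by
  rw [frobInner, frobInner, ← trace_conjTranspose, conjTranspose_mul, conjTranspose_conjTranspose]

theorem re_frobInner_sub_self (A B : Matrix m m ℂ) :
    (frobInner (A - B) (A - B)).re =
      (frobInner A A).re + (frobInner B B).re - 2 * (frobInner A B).re := by
  have hexpand : frobInner (A - B) (A - B) =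
      frobInner A A - frobInner A B - frobInner B A + frobInner B B := by
    simp only [frobInner, conjTranspose_sub, sub_mul, mul_sub, trace_sub]
    ring
  rw [hexpand, frobInner_comm B A]
  simp only [Complex.add_re, Complex.sub_re, Complex.star_def, Complex.conj_re]
  ring

namespace IsPureState

variable {M : Matrix m m ℂ}

theorem frobInner_self (h : IsPureState M) : frobInner M M = 1 := by
  rw [frobInner, h.1.eq, h.2.1, h.2.2]

theorem frobNorm_sub {N : Matrix m m ℂ} (hM : IsPureState M) (hN : IsPureState N) :
    frobNorm (M - N) = √(2 - 2 * (frobInner M N).re) := by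
  rw [frobNorm, re_frobInner_sub_self, hM.frobInner_self, hN.frobInner_self]
  norm_num [one_add_one_eq_two]

theorem apply_eq_sum (h : IsPureState M) (j k : m) : M j k = ∑ l, star (M l j) * M l k := by
  calc M j k = (Mᴴ * M) j k := by rw [h.1.eq, h.2.1]
    _ = _ := by simp [mul_apply]

theorem re_apply_self (h : IsPureState M) (j : m) : (M j j).re = ∑ l, ‖M l j‖ ^ 2 := by
  simp only [h.apply_eq_sum j j, Complex.star_def, Complex.conj_mul', Complex.re_sum]
  norm_cast

theorem re_apply_self_nonneg (h : IsPureState M) (j : m) : 0 ≤ (M j j).re := by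
  rw [h.re_apply_self]
  positivity

theorem sum_re_apply_self (h : IsPureState M) : ∑ j, (M j j).re = 1 := by
  simpa [trace, Complex.re_sum] using congrArg Complex.re h.2.2

theorem re_apply_self_le_one (h : IsPureState M) (j : m) : (M j j).re ≤ 1 :=
  h.sum_re_apply_self ▸ Finset.single_le_sum (fun l _ => h.re_apply_self_nonneg l)
    (Finset.mem_univ j)

theorem sum_re_apply_self_comp_le_one {ι : Type*} [Fintype ι] (h : IsPureState M) (f : ι ↪ m) :
    ∑ i, (M (f i) (f i)).re ≤ 1 := by
  rw [← h.sum_re_apply_self, ← Finset.sum_map Finset.univ f (fun j => (M j j).re)]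
  exact Finset.sum_le_univ_sum_of_nonneg h.re_apply_self_nonneg

theorem norm_apply_le (h : IsPureState M) (j k : m) :
    ‖M j k‖ ≤ √(M j j).re * √(M k k).re := by
  rw [← Real.sqrt_mul (h.re_apply_self_nonneg j), h.re_apply_self, h.re_apply_self]
  refine Real.le_sqrt_of_sq_le ?_
  calc ‖M j k‖ ^ 2 ≤ (∑ l, ‖M l j‖ * ‖M l k‖) ^ 2 := by
        gcongr
        rw [h.apply_eq_sum j k]
        exact (norm_sum_le _ _).trans_eq (by simp)
    _ ≤ _ := Finset.sum_mul_sq_le_sq_mul_sq _ _ _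

end IsPureState

theorem isPureState_single [DecidableEq m] (i : m) : IsPureState (single i i (1 : ℂ)) := by
  refine ⟨?_, ?_, trace_single_eq_same i 1⟩
  · rw [IsHermitian, conjTranspose_single, star_one]
  · rw [single_mul_single_same, one_mul]

theorem isPureState_vecMulVec_star {u : m → ℂ} (hu : star u ⬝ᵥ u = 1) :
    IsPureState (vecMulVec u (star u)) := by
  refine ⟨?_, ?_, by rw [trace_vecMulVec, dotProduct_comm, hu]⟩
  · rw [IsHermitian, conjTranspose_vecMulVec, star_star]
  · rw [vecMulVec_mul_vecMulVec, hu, one_smul]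

theorem frobInner_vecMulVec_star (u : m → ℂ) (A : Matrix m m ℂ) :
    frobInner (vecMulVec u (star u)) A = star u ⬝ᵥ (A *ᵥ u) := by
  rw [frobInner, conjTranspose_vecMulVec, star_star, vecMulVec_mul, trace_vecMulVec,
    dotProduct_comm, dotProduct_mulVec]

end PureState

section ProdMat

variable {q : ℕ} {d : Fin q → ℕ}

theorem prodMat_conjTranspose (A : ∀ α, Matrix (Fin (d α)) (Fin (d α)) ℂ) :
    (prodMat A)ᴴ = prodMat fun α => (A α)ᴴ := by
  ext x y
  simp [prodMat, conjTranspose_apply]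

theorem prodMat_mul_prodMat (A B : ∀ α, Matrix (Fin (d α)) (Fin (d α)) ℂ) :
    prodMat A * prodMat B = prodMat fun α => A α * B α := by
  ext x y
  simp only [mul_apply, prodMat, Finset.prod_mul_distrib.symm]
  exact (Fintype.prod_sum fun α l => A α (x α) l * B α l (y α)).symm

theorem trace_prodMat (A : ∀ α, Matrix (Fin (d α)) (Fin (d α)) ℂ) :
    (prodMat A).trace = ∏ α, (A α).trace :=
  (Fintype.prod_sum fun α j => A α j j).symm

theorem IsPureState.prodMat {A : ∀ α, Matrix (Fin (d α)) (Fin (d α)) ℂ}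
    (h : ∀ α, IsPureState (A α)) : IsPureState (prodMat A) := by
  refine ⟨?_, ?_, ?_⟩
  · rw [IsHermitian, prodMat_conjTranspose]
    simp only [fun α => (h α).1.eq]
  · rw [prodMat_mul_prodMat]
    simp only [fun α => (h α).2.1]
  · simp [trace_prodMat, fun α => (h α).2.2]

theorem prodMat_single (i : ∀ α, Fin (d α)) :
    prodMat (fun α => single (i α) (i α) (1 : ℂ)) = single i i 1 := by
  ext x y
  simp [prodMat, single_apply, Fintype.prod_boole, funext_iff, forall_and]

theorem norm_prodMat_apply_le {B : ∀ α, Matrix (Fin (d α)) (Fin (d α)) ℂ}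
    (hB : ∀ α, IsPureState (B α)) (x y : ∀ α, Fin (d α)) :
    ‖prodMat B x y‖ ≤
      (∏ α, √(B α (x α) (x α)).re) * ∏ α, √(B α (y α) (y α)).re := by
  rw [← Finset.prod_mul_distrib, prodMat, norm_prod]
  exact Finset.prod_le_prod (fun α _ => norm_nonneg _) fun α _ => (hB α).norm_apply_le _ _

end ProdMat

theorem sum_prod_le_one_of_sum_sq_le_one {κ ι : Type*} [Fintype κ] [DecidableEq κ] [Fintype ι]
    {s : κ → ι → ℝ} {a b : κ} (hab : a ≠ b) (hs0 : ∀ α j, 0 ≤ s α j) (hs1 : ∀ α j, s α j ≤ 1)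
    (ha : ∑ j, s a j ^ 2 ≤ 1) (hb : ∑ j, s b j ^ 2 ≤ 1) :
    ∑ j, ∏ α, s α j ≤ 1 := by
  -- drop all factors but `a` and `b`, then use AM-GM
  have hprod (j : ι) : ∏ α, s α j ≤ s a j * s b j := by
    rw [← Finset.prod_pair (f := fun α => s α j) hab]
    exact Finset.prod_le_prod_of_subset_of_le_one (Finset.subset_univ _)
      (fun α _ => hs0 α j) fun α _ _ => hs1 α j
  calc ∑ j, ∏ α, s α j ≤ ∑ j, (s a j ^ 2 + s b j ^ 2) / 2 :=
        Finset.sum_le_sum fun j _ =>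
          (hprod j).trans (by nlinarith [sq_nonneg (s a j - s b j)])
    _ ≤ 1 := by
        rw [← Finset.sum_div, Finset.sum_add_distrib]
        linarith

theorem norm_star_dotProduct_mulVec_le {ι : Type*} [Fintype ι] {M : Matrix ι ι ℂ} {w : ι → ℝ}
    (hM : ∀ j k, ‖M j k‖ ≤ w j * w k) (v : ι → ℂ) :
    ‖star v ⬝ᵥ (M *ᵥ v)‖ ≤ (∑ j, ‖v j‖ * w j) ^ 2 := by
  calc ‖star v ⬝ᵥ (M *ᵥ v)‖ ≤ ∑ j, ∑ k, ‖v j‖ * ‖M j k‖ * ‖v k‖ := by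
        simp only [dotProduct, mulVec, Finset.mul_sum]
        refine (norm_sum_le _ _).trans (Finset.sum_le_sum fun j _ => ?_)
        refine (norm_sum_le _ _).trans_eq (Finset.sum_congr rfl fun k _ => ?_)
        simp [mul_assoc]
    _ ≤ ∑ j, ∑ k, (‖v j‖ * w j) * (‖v k‖ * w k) := by
        refine Finset.sum_le_sum fun j _ => Finset.sum_le_sum fun k _ => ?_
        calc ‖v j‖ * ‖M j k‖ * ‖v k‖ ≤ ‖v j‖ * (w j * w k) * ‖v k‖ := by gcongr; exact hM j k
          _ = _ := by ring
    _ = (∑ j, ‖v j‖ * w j) ^ 2 := by rw [sq, Finset.sum_mul_sum]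

theorem star_dotProduct_mulVec_sum_single {ι κ : Type*} [Fintype ι] [Fintype κ] [DecidableEq κ]
    (g : ι → κ) (v : ι → ℂ) (A : Matrix κ κ ℂ) :
    star (∑ j, Pi.single (g j) (v j)) ⬝ᵥ (A *ᵥ ∑ j, Pi.single (g j) (v j)) =
      star v ⬝ᵥ (A.submatrix g g *ᵥ v) := by
  simp only [star_sum, ← Pi.single_star, mulVec_sum, sum_dotProduct, dotProduct_sum,
    single_dotProduct, mulVec_single]
  rw [Finset.sum_comm]
  simp [dotProduct, mulVec, Finset.mul_sum]

section Psi

variable {p : ℕ} {n : Fin (p + 2) → ℕ}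

def diagIndex (hn : Monotone n) (j : Fin (n 0)) : ∀ α, Fin (n α) :=
  fun α => Fin.castLE (hn (Fin.zero_le α)) j

theorem diagIndex_apply_injective (hn : Monotone n) (α : Fin (p + 2)) :
    Function.Injective fun j => diagIndex hn j α :=
  Fin.castLE_injective _

theorem diagIndex_injective (hn : Monotone n) : Function.Injective (diagIndex hn) :=
  fun _ _ h => diagIndex_apply_injective hn 0 (congrFun h 0)

theorem psiVec_eq_sum_single (hn : Monotone n) (v : Fin (n 0) → ℂ) :
    psiVec hn v = ∑ j, Pi.single (diagIndex hn j) (v j) := by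
  ext x
  simp [psiVec, Pi.single_apply, Fintype.prod_boole, funext_iff, diagIndex]

theorem frobInner_Epsi (hn : Monotone n) (v : Fin (n 0) → ℂ)
    (A : Matrix (∀ α, Fin (n α)) (∀ α, Fin (n α)) ℂ) :
    frobInner (Epsi hn v) A = star v ⬝ᵥ (A.submatrix (diagIndex hn) (diagIndex hn) *ᵥ v) := by
  rw [show Epsi hn v = vecMulVec (psiVec hn v) (star (psiVec hn v)) from rfl,
    frobInner_vecMulVec_star, psiVec_eq_sum_single, star_dotProduct_mulVec_sum_single]

theorem isPureState_Epsi (hn : Monotone n) {v : Fin (n 0) → ℂ} (hv : ∑ j, ‖v j‖ ^ 2 = 1) :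
    IsPureState (Epsi hn v) := by
  refine isPureState_vecMulVec_star ?_
  have h := star_dotProduct_mulVec_sum_single (diagIndex hn) v 1
  rw [one_mulVec, submatrix_one _ (diagIndex_injective hn), one_mulVec,
    ← psiVec_eq_sum_single] at h
  rw [h]
  simp only [dotProduct, Pi.star_apply, Complex.star_def, Complex.conj_mul']
  exact_mod_cast hv

theorem Spsi_eq_single (hn : Monotone n) (j₀ : Fin (n 0)) :
    Spsi hn j₀ = single (diagIndex hn j₀) (diagIndex hn j₀) 1 :=
  prodMat_single _

theorem frobInner_Epsi_Spsi (hn : Monotone n) (v : Fin (n 0) → ℂ) (j₀ : Fin (n 0)) :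
    frobInner (Epsi hn v) (Spsi hn j₀) = ‖v j₀‖ ^ 2 := by
  rw [Spsi_eq_single, frobInner_Epsi]
  simp [dotProduct, mulVec, single_apply, (diagIndex_injective hn).eq_iff, ite_and,
    Complex.conj_mul']

theorem re_frobInner_Epsi_prodMat_le (hn : Monotone n) {v : Fin (n 0) → ℂ} {j₀ : Fin (n 0)}
    (hj₀ : ∀ j, ‖v j‖ ≤ ‖v j₀‖) {B : ∀ α, Matrix (Fin (n α)) (Fin (n α)) ℂ}
    (hB : ∀ α, IsPureState (B α)) :
    (frobInner (Epsi hn v) (prodMat B)).re ≤ ‖v j₀‖ ^ 2 := by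
  set w : Fin (n 0) → ℝ := fun j => ∏ α, √(B α (diagIndex hn j α) (diagIndex hn j α)).re
  have hsq (α : Fin (p + 2)) :
      ∑ j, √(B α (diagIndex hn j α) (diagIndex hn j α)).re ^ 2 ≤ 1 := by
    simp only [Real.sq_sqrt ((hB α).re_apply_self_nonneg _)]
    exact (hB α).sum_re_apply_self_comp_le_one ⟨_, diagIndex_apply_injective hn α⟩
  have hw : ∑ j, w j ≤ 1 :=
    sum_prod_le_one_of_sum_sq_le_one (a := 0) (b := 1) zero_ne_one (fun _ _ => Real.sqrt_nonneg _)
      (fun α _ => Real.sqrt_le_one.mpr ((hB α).re_apply_self_le_one _)) (hsq 0) (hsq 1)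
  calc (frobInner (Epsi hn v) (prodMat B)).re
      ≤ ‖frobInner (Epsi hn v) (prodMat B)‖ := Complex.re_le_norm _
    _ ≤ (∑ j, ‖v j‖ * w j) ^ 2 := by
        rw [frobInner_Epsi]
        exact norm_star_dotProduct_mulVec_le (fun j k => norm_prodMat_apply_le hB _ _) v
    _ ≤ (‖v j₀‖ * ∑ j, w j) ^ 2 := by
        rw [Finset.mul_sum]
        gcongr with j
        exact hj₀ j
    _ ≤ ‖v j₀‖ ^ 2 := by
        rw [mul_pow]
        exact mul_le_of_le_one_right (by positivity) (pow_le_one₀ (by positivity) hw)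

end Psi

theorem dist_Epsi_pureProduct_general {p : ℕ} {n : Fin (p + 2) → ℕ}
    (hn : Monotone n)
    (v : Fin (n 0) → ℂ) (hv : ∑ j, ‖v j‖ ^ 2 = 1)
    (j₀ : Fin (n 0)) (hj₀ : ∀ j, ‖v j‖ ≤ ‖v j₀‖) :
    (∀ A : Matrix (∀ α, Fin (n α)) (∀ α, Fin (n α)) ℂ, IsPureProductState A →
        Real.sqrt (2 * (1 - ‖v j₀‖ ^ 2)) ≤ frobNorm (Epsi hn v - A)) ∧
      IsPureProductState (Spsi hn j₀) ∧
      frobNorm (Epsi hn v - Spsi hn j₀) = Real.sqrt (2 * (1 - ‖v j₀‖ ^ 2)) := by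
  have hE := isPureState_Epsi hn hv
  have hS : IsPureState (Spsi hn j₀) := IsPureState.prodMat fun _ => isPureState_single _
  refine ⟨?_, ⟨_, fun _ => isPureState_single _, rfl⟩, ?_⟩
  · rintro _ ⟨B, hB, rfl⟩
    rw [hE.frobNorm_sub (IsPureState.prodMat hB)]
    gcongr
    linarith [re_frobInner_Epsi_prodMat_le hn hj₀ hB]
  · rw [hE.frobNorm_sub hS, frobInner_Epsi_Spsi]
    norm_cast
    ring_nf

/-- The minimum Frobenius distance from `E_ψ` to the set of pure
product states equals `√(2 (1 - |v j₀|²))`, where `|v j₀| = max_j |v j|`: every pure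
product state `A` satisfies `‖E_ψ - A‖ ≥ √(2 (1 - |v j₀|²))`, and the bound is attained
by the pure product state `S_ψ`. -/
theorem dist_Epsi_pureProduct {p : ℕ} {n : Fin (p + 2) → ℕ}
    (hn : Monotone n) (hn₁ : 2 ≤ n 0)
    (v : Fin (n 0) → ℂ) (hv : ∑ j, ‖v j‖ ^ 2 = 1)
    (j₀ : Fin (n 0)) (hj₀ : ∀ j, ‖v j‖ ≤ ‖v j₀‖) :
    (∀ A : Matrix (∀ α, Fin (n α)) (∀ α, Fin (n α)) ℂ, IsPureProductState A →
        Real.sqrt (2 * (1 - ‖v j₀‖ ^ 2)) ≤ frobNorm (Epsi hn v - A)) ∧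
      IsPureProductState (Spsi hn j₀) ∧
      frobNorm (Epsi hn v - Spsi hn j₀) = Real.sqrt (2 * (1 - ‖v j₀‖ ^ 2)) :=
  dist_Epsi_pureProduct_general hn v hv j₀ hj₀
end
end

section
/- Let 2 ≤ N₁ ≤ N₂, N = N₁N₂, and let E be the maximally entangled pure state on ℂ^{N₁}⊗ℂ^{N₂} (E = |ψ⟩⟨ψ| with ψ = (1/√N₁) Σ_{j=1}^{N₁} e_j⊗e_j). Then for any two separable states Q₁, Q₂ on ℂ^N, the length of the component of Q₁ − Q₂ along the unit normal direction (E − I/N)/‖E − I/N‖ is at most (1/N₁)·√(N/(N−1)); that is, |⟨Q₁ − Q₂, E − I/N⟩| / ‖E − I/N‖ ≤ (1/N₁)·√(N/(N−1)), where ⟨·,·⟩ and ‖·‖ are the Frobenius inner product and norm. -/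
/-! For a pure product state `A ⊗ B` the overlap `⟨A ⊗ B, E⟩` equals `N₁⁻¹ Tr (A Cᵀ)`, where `C` is
the compression of `B` to the first `N₁` coordinates; since `A` is a projection and `C ≥ 0` has
trace at most `Tr B = 1`, it lies in `[0, 1/N₁]`, and by convexity so does `⟨Q, E⟩` for every
separable `Q`. Separable states have trace one, so the identity part of `E - I/N` contributes
nothing to `⟨Q₁ - Q₂, E - I/N⟩`, which is therefore a difference of two numbers in `[0, 1/N₁]`.
Finally `‖E - I/N‖² = 1 - 1/N` because `E` is a projection of trace one. -/

open Matrix BigOperators ComplexOrder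

noncomputable section

/-- The Kronecker product of two matrices, on the product basis. -/
def prodMat2 {m₁ m₂ : Type*} (A : Matrix m₁ m₁ ℂ) (B : Matrix m₂ m₂ ℂ) :
    Matrix (m₁ × m₂) (m₁ × m₂) ℂ :=
  fun j k => A j.1 k.1 * B j.2 k.2

/-- A pure product state on a bipartite system. -/
def IsPureProductState2 {m₁ m₂ : Type*} [Fintype m₁] [Fintype m₂]
    (M : Matrix (m₁ × m₂) (m₁ × m₂) ℂ) : Prop :=
  ∃ (A : Matrix m₁ m₁ ℂ) (B : Matrix m₂ m₂ ℂ),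
    IsPureState A ∧ IsPureState B ∧ M = prodMat2 A B

/-- A separable state on a bipartite system: a finite convex combination of
pure product states. -/
def IsSeparable2 {m₁ m₂ : Type*} [Fintype m₁] [Fintype m₂]
    (M : Matrix (m₁ × m₂) (m₁ × m₂) ℂ) : Prop :=
  ∃ (k : ℕ) (c : Fin k → ℝ) (P : Fin k → Matrix (m₁ × m₂) (m₁ × m₂) ℂ),
    (∀ i, 0 ≤ c i) ∧ (∑ i, c i) = 1 ∧ (∀ i, IsPureProductState2 (P i)) ∧
      M = ∑ i, (c i : ℂ) • P i

/-- The maximally entangled pure state on `ℂ^{N₁} ⊗ ℂ^{N₂}` (for `N₁ ≤ N₂`):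
`E = |ψ⟩⟨ψ|` with `ψ = (1/√N₁) ∑ j, e j ⊗ e j`. -/
def maxEnt (N₁ N₂ : ℕ) : Matrix (Fin N₁ × Fin N₂) (Fin N₁ × Fin N₂) ℂ :=
  fun x y =>
    (if (x.1 : ℕ) = (x.2 : ℕ) then (((Real.sqrt N₁ : ℝ) : ℂ))⁻¹ else 0) *
      star (if (y.1 : ℕ) = (y.2 : ℕ) then (((Real.sqrt N₁ : ℝ) : ℂ))⁻¹ else 0)

section Frobenius

variable {m : Type*} [Fintype m]

lemma frobInner_sub_left (X Y M : Matrix m m ℂ) :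
    frobInner (X - Y) M = frobInner X M - frobInner Y M := by
  rw [frobInner, conjTranspose_sub, sub_mul, trace_sub]; rfl

lemma frobInner_sub_right (X M M' : Matrix m m ℂ) :
    frobInner X (M - M') = frobInner X M - frobInner X M' := by
  rw [frobInner, mul_sub, trace_sub]; rfl

lemma frobInner_smul_one [DecidableEq m] (X : Matrix m m ℂ) (c : ℂ) :
    frobInner X (c • 1) = c * star X.trace := by
  rw [frobInner, mul_smul_comm, mul_one, trace_smul, smul_eq_mul, trace_conjTranspose]

lemma frobInner_sum_smul {ι : Type*} (s : Finset ι) (c : ι → ℝ) (P : ι → Matrix m m ℂ)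
    (M : Matrix m m ℂ) :
    frobInner (∑ i ∈ s, (c i : ℂ) • P i) M = ∑ i ∈ s, c i • frobInner (P i) M := by
  simp only [frobInner, conjTranspose_sum, conjTranspose_smul, Complex.star_def,
    Complex.conj_ofReal, Finset.sum_mul, smul_mul_assoc, trace_sum, trace_smul, Complex.real_smul,
    smul_eq_mul]

lemma frobInner_sub_sub_smul_one_of_trace_eq [DecidableEq m] {X Y : Matrix m m ℂ}
    (h : X.trace = Y.trace) (M : Matrix m m ℂ) (c : ℂ) :
    frobInner (X - Y) (M - c • 1) = frobInner X M - frobInner Y M := by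
  rw [frobInner_sub_left, frobInner_sub_right, frobInner_sub_right, frobInner_smul_one,
    frobInner_smul_one, h]
  ring

lemma frobNorm_sub_inv_card_smul_one [DecidableEq m] {E : Matrix m m ℂ} (hE : E.IsHermitian)
    (hEE : E * E = E) (htr : E.trace = 1) :
    frobNorm (E - (Fintype.card m : ℂ)⁻¹ • 1) = √(1 - (Fintype.card m : ℝ)⁻¹) := by
  generalize hn : Fintype.card m = n
  have hsq : (E - (n : ℂ)⁻¹ • 1) * (E - (n : ℂ)⁻¹ • 1)
      = E - (2 * (n : ℂ)⁻¹) • E + ((n : ℂ)⁻¹ * (n : ℂ)⁻¹) • 1 := by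
    simp only [sub_mul, mul_sub, smul_mul_assoc, mul_smul_comm, one_mul, mul_one, hEE]
    module
  have htr_sq :
      ((E - (n : ℂ)⁻¹ • 1)ᴴ * (E - (n : ℂ)⁻¹ • 1)).trace = ((1 - (n : ℝ)⁻¹ : ℝ) : ℂ) := by
    rw [conjTranspose_sub, conjTranspose_smul, conjTranspose_one, hE.eq, star_inv₀, star_natCast,
      hsq, trace_add, trace_sub, trace_smul, trace_smul, trace_one, hn, htr]
    push_cast
    rcases eq_or_ne (n : ℂ) 0 with hn₀ | hn₀
    · simp [hn₀]
    · simp only [smul_eq_mul]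
      field_simp
      ring
  rw [frobNorm, frobInner, htr_sq, Complex.ofReal_re]

end Frobenius

section Projection

variable {n : Type*} [Fintype n]

lemma IsPureState.posSemidef {A : Matrix n n ℂ} (hA : IsPureState A) : A.PosSemidef := by
  have h := posSemidef_conjTranspose_mul_self A
  rwa [hA.1.eq, hA.2.1] at h

lemma IsPureState.isState {A : Matrix n n ℂ} (hA : IsPureState A) : IsState A :=
  ⟨hA.posSemidef, hA.2.2⟩

lemma trace_proj_mul_nonneg {A C : Matrix n n ℂ} (hA : A.IsHermitian) (hAA : A * A = A)
    (hC : C.PosSemidef) : 0 ≤ (A * C).trace := by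
  have h := (hC.conjTranspose_mul_mul_same A).trace_nonneg
  rwa [hA.eq, trace_mul_comm, ← mul_assoc, hAA] at h

lemma trace_proj_mul_le [DecidableEq n] {A C : Matrix n n ℂ} (hA : A.IsHermitian)
    (hAA : A * A = A) (hC : C.PosSemidef) : (A * C).trace ≤ C.trace := by
  have hB : (1 - A).IsHermitian := isHermitian_one.sub hA
  have hBB : (1 - A) * (1 - A) = 1 - A := by
    rw [sub_mul, mul_sub, mul_sub, hAA]; simp
  have h := trace_proj_mul_nonneg hB hBB hC
  rwa [sub_mul, one_mul, trace_sub, sub_nonneg] at h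

lemma trace_submatrix_le_of_injective {l : Type*} [Fintype l] {B : Matrix n n ℂ}
    (hB : B.PosSemidef) {ι : l → n} (hι : Function.Injective ι) :
    (B.submatrix ι ι).trace ≤ B.trace := by
  calc (B.submatrix ι ι).trace = ∑ b ∈ Finset.univ.map ⟨ι, hι⟩, B b b := by
        rw [Finset.sum_map]; rfl
    _ ≤ B.trace := Finset.sum_le_univ_sum_of_nonneg fun _ => hB.diag_nonneg

end Projection

open scoped Kronecker

lemma trace_mul_vecMulVec {n : Type*} [Fintype n] (M : Matrix n n ℂ) (a b : n → ℂ) :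
    (M * vecMulVec a b).trace = b ⬝ᵥ (M *ᵥ a) := by
  rw [mul_vecMulVec, trace_vecMulVec, dotProduct_comm]

section Entangled

variable {m₁ m₂ : Type*} [DecidableEq m₂]

/-- The vector `∑ j, e j ⊗ e (ι j)`; for the inclusion `ι : Fin N₁ → Fin N₂` it is `√N₁ ψ`. -/
def entVec (ι : m₁ → m₂) : m₁ × m₂ → ℂ := fun x => if x.2 = ι x.1 then 1 else 0

lemma entVec_dotProduct_self [Fintype m₁] [Fintype m₂] (ι : m₁ → m₂) :
    entVec ι ⬝ᵥ entVec ι = Fintype.card m₁ := by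
  simp [entVec, dotProduct, Fintype.sum_prod_type]

lemma entVec_dotProduct_kronecker_mulVec [Fintype m₁] [Fintype m₂] (ι : m₁ → m₂)
    (A : Matrix m₁ m₁ ℂ) (B : Matrix m₂ m₂ ℂ) :
    entVec ι ⬝ᵥ ((A ⊗ₖ B) *ᵥ entVec ι) = (A * (B.submatrix ι ι)ᵀ).trace := by
  simp [entVec, dotProduct, mulVec, Fintype.sum_prod_type, trace, mul_apply]

lemma entVec_dotProduct_kronecker_mulVec_mem_Icc [Fintype m₁] [Fintype m₂] [DecidableEq m₁]
    {ι : m₁ → m₂} (hι : Function.Injective ι)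
    {A : Matrix m₁ m₁ ℂ} {B : Matrix m₂ m₂ ℂ} (hA : IsPureState A) (hB : IsState B) :
    entVec ι ⬝ᵥ ((A ⊗ₖ B) *ᵥ entVec ι) ∈ Set.Icc 0 1 := by
  rw [entVec_dotProduct_kronecker_mulVec]
  have hC : (B.submatrix ι ι)ᵀ.PosSemidef := (hB.1.submatrix ι).transpose
  refine ⟨trace_proj_mul_nonneg hA.1 hA.2.1 hC, ?_⟩
  calc _ ≤ (B.submatrix ι ι)ᵀ.trace := trace_proj_mul_le hA.1 hA.2.1 hC
    _ = (B.submatrix ι ι).trace := trace_transpose _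
    _ ≤ B.trace := trace_submatrix_le_of_injective hB.1 hι
    _ = 1 := hB.2

end Entangled

section MaxEnt

variable {N₁ N₂ : ℕ}

lemma maxEnt_eq_smul_vecMulVec (h : N₁ ≤ N₂) :
    maxEnt N₁ N₂ = (N₁ : ℂ)⁻¹ • vecMulVec (entVec (Fin.castLE h)) (entVec (Fin.castLE h)) := by
  have hsq : ((√N₁ : ℝ) : ℂ)⁻¹ * ((√N₁ : ℝ) : ℂ)⁻¹ = (N₁ : ℂ)⁻¹ := by
    rw [← mul_inv, ← Complex.ofReal_mul, Real.mul_self_sqrt (Nat.cast_nonneg N₁),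
      Complex.ofReal_natCast]
  have hcast : ∀ x : Fin N₁ × Fin N₂, ((x.1 : ℕ) = x.2) ↔ x.2 = Fin.castLE h x.1 := fun x => by
    rw [Fin.ext_iff, Fin.val_castLE, eq_comm]
  ext x y
  simp only [maxEnt, entVec, vecMulVec_apply, Matrix.smul_apply, smul_eq_mul, hcast]
  split_ifs <;> simp [hsq]

lemma maxEnt_isHermitian : (maxEnt N₁ N₂).IsHermitian := by
  ext x y
  simp only [conjTranspose_apply, maxEnt, star_mul', star_star]
  ring

lemma maxEnt_mul_self (h : N₁ ≤ N₂) : maxEnt N₁ N₂ * maxEnt N₁ N₂ = maxEnt N₁ N₂ := by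
  rw [maxEnt_eq_smul_vecMulVec h, smul_mul_smul_comm, vecMulVec_mul_vecMulVec,
    entVec_dotProduct_self, Fintype.card_fin, vecMulVec_smul, smul_smul]
  rcases eq_or_ne (N₁ : ℂ) 0 with hN | hN
  · simp [hN]
  · field_simp

lemma maxEnt_trace (h : N₁ ≤ N₂) (hN₁ : 0 < N₁) : (maxEnt N₁ N₂).trace = 1 := by
  rw [maxEnt_eq_smul_vecMulVec h, trace_smul, trace_vecMulVec, entVec_dotProduct_self,
    Fintype.card_fin, smul_eq_mul, inv_mul_cancel₀ (Nat.cast_ne_zero.mpr hN₁.ne')]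

lemma frobInner_kronecker_maxEnt_mem_Icc (h : N₁ ≤ N₂) {A : Matrix (Fin N₁) (Fin N₁) ℂ}
    {B : Matrix (Fin N₂) (Fin N₂) ℂ} (hA : IsPureState A) (hB : IsPureState B) :
    frobInner (A ⊗ₖ B) (maxEnt N₁ N₂) ∈ Set.Icc 0 (N₁ : ℂ)⁻¹ := by
  obtain ⟨h0, h1⟩ :=
    entVec_dotProduct_kronecker_mulVec_mem_Icc (Fin.castLE_injective h) hA hB.isState
  have hN₁ : (0 : ℂ) ≤ (N₁ : ℂ)⁻¹ := by positivity
  rw [frobInner, maxEnt_eq_smul_vecMulVec h, mul_smul_comm, trace_smul, trace_mul_vecMulVec,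
    conjTranspose_kronecker, hA.1.eq, hB.1.eq, smul_eq_mul]
  exact ⟨mul_nonneg hN₁ h0, mul_le_of_le_one_right hN₁ h1⟩

end MaxEnt

section Separable

variable {m₁ m₂ : Type*} [Fintype m₁] [Fintype m₂]

lemma IsPureProductState2.trace_eq_one {P : Matrix (m₁ × m₂) (m₁ × m₂) ℂ}
    (hP : IsPureProductState2 P) : P.trace = 1 := by
  obtain ⟨A, B, hA, hB, rfl⟩ := hP
  rw [show prodMat2 A B = A ⊗ₖ B from rfl, trace_kronecker, hA.2.2, hB.2.2, one_mul]

lemma IsSeparable2.trace_eq_one {Q : Matrix (m₁ × m₂) (m₁ × m₂) ℂ} (hQ : IsSeparable2 Q) :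
    Q.trace = 1 := by
  obtain ⟨k, c, P, -, hc, hP, rfl⟩ := hQ
  simp only [trace_sum, trace_smul, (hP _).trace_eq_one, smul_eq_mul, mul_one]
  exact_mod_cast hc

lemma IsSeparable2.frobInner_mem_of_convex {Q : Matrix (m₁ × m₂) (m₁ × m₂) ℂ}
    (hQ : IsSeparable2 Q) {M : Matrix (m₁ × m₂) (m₁ × m₂) ℂ} {S : Set ℂ} (hS : Convex ℝ S)
    (hPS : ∀ P, IsPureProductState2 P → frobInner P M ∈ S) : frobInner Q M ∈ S := by
  obtain ⟨k, c, P, hc₀, hc₁, hP, rfl⟩ := hQ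
  rw [frobInner_sum_smul]
  exact hS.sum_mem (fun i _ => hc₀ i) hc₁ fun i _ => hPS _ (hP i)

end Separable

lemma IsSeparable2.frobInner_maxEnt_mem_Icc {N₁ N₂ : ℕ} (h : N₁ ≤ N₂)
    {Q : Matrix (Fin N₁ × Fin N₂) (Fin N₁ × Fin N₂) ℂ} (hQ : IsSeparable2 Q) :
    frobInner Q (maxEnt N₁ N₂) ∈ Set.Icc 0 (N₁ : ℂ)⁻¹ :=
  hQ.frobInner_mem_of_convex (convex_Icc _ _) fun _ ⟨_, _, hA, hB, hP⟩ =>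
    hP ▸ frobInner_kronecker_maxEnt_mem_Icc h hA hB

lemma Complex.norm_sub_le_of_mem_Icc {z w : ℂ} {r : ℝ} (hz : z ∈ Set.Icc 0 (r : ℂ))
    (hw : w ∈ Set.Icc 0 (r : ℂ)) : ‖z - w‖ ≤ r := by
  simp only [Set.mem_Icc, Complex.le_def, Complex.zero_re, Complex.zero_im,
    Complex.ofReal_re, Complex.ofReal_im] at hz hw
  have hreal : z - w = ((z.re - w.re : ℝ) : ℂ) := Complex.ext (by simp) (by simp; linarith)
  rw [hreal, Complex.norm_real, Real.norm_eq_abs, abs_sub_le_iff]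
  constructor <;> linarith

lemma div_sqrt_one_sub_inv_le {x a n : ℝ} (hx : x ≤ a) (hn : 1 < n) :
    x / √(1 - n⁻¹) ≤ a * √(n / (n - 1)) := by
  have hpos : 0 < 1 - n⁻¹ := sub_pos.mpr (inv_lt_one_of_one_lt₀ hn)
  have hinv : n / (n - 1) = (1 - n⁻¹)⁻¹ := by
    field_simp [(by linarith : n - 1 ≠ 0)]
  rw [hinv, Real.sqrt_inv, ← div_eq_mul_inv]
  exact div_le_div_of_nonneg_right hx (Real.sqrt_nonneg _)

/-- Let `2 ≤ N₁ ≤ N₂`, `N = N₁ N₂`, and let `E` be the maximally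
entangled pure state on `ℂ^{N₁} ⊗ ℂ^{N₂}`.  For any two separable states `Q₁, Q₂`, the
length of the component of `Q₁ - Q₂` along the unit normal `(E - I/N)/‖E - I/N‖` is at
most `(1/N₁) ⬝ √(N/(N-1))`:
`|⟨Q₁ - Q₂, E - I/N⟩| / ‖E - I/N‖ ≤ (1/N₁) ⬝ √(N/(N-1))`. -/
theorem separable_component_along_maxEnt {N₁ N₂ : ℕ} (h₁ : 2 ≤ N₁) (h₁₂ : N₁ ≤ N₂)
    (Q₁ Q₂ : Matrix (Fin N₁ × Fin N₂) (Fin N₁ × Fin N₂) ℂ)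
    (hQ₁ : IsSeparable2 Q₁) (hQ₂ : IsSeparable2 Q₂) :
    ‖frobInner (Q₁ - Q₂)
        (maxEnt N₁ N₂ - (((N₁ * N₂ : ℕ) : ℂ))⁻¹ • (1 : Matrix (Fin N₁ × Fin N₂) (Fin N₁ × Fin N₂) ℂ))‖ /
      frobNorm (maxEnt N₁ N₂ - (((N₁ * N₂ : ℕ) : ℂ))⁻¹ • (1 : Matrix (Fin N₁ × Fin N₂) (Fin N₁ × Fin N₂) ℂ))
    ≤ ((N₁ : ℝ))⁻¹ * Real.sqrt (((N₁ * N₂ : ℕ) : ℝ) / (((N₁ * N₂ : ℕ) : ℝ) - 1)) := by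
  have hN : 1 < N₁ * N₂ := by nlinarith
  have hcard : Fintype.card (Fin N₁ × Fin N₂) = N₁ * N₂ := by simp
  have hnum : ‖frobInner (Q₁ - Q₂)
      (maxEnt N₁ N₂ - (((N₁ * N₂ : ℕ) : ℂ))⁻¹ • 1)‖ ≤ (N₁ : ℝ)⁻¹ := by
    rw [frobInner_sub_sub_smul_one_of_trace_eq (hQ₁.trace_eq_one.trans hQ₂.trace_eq_one.symm)]
    exact Complex.norm_sub_le_of_mem_Icc (by simpa using hQ₁.frobInner_maxEnt_mem_Icc h₁₂)
      (by simpa using hQ₂.frobInner_maxEnt_mem_Icc h₁₂)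
  rw [← hcard, frobNorm_sub_inv_card_smul_one maxEnt_isHermitian (maxEnt_mul_self h₁₂)
    (maxEnt_trace h₁₂ (by omega))]
  rw [← hcard] at hnum hN
  exact div_sqrt_one_sub_inv_le hnum (by exact_mod_cast hN)
end
end

section
/- Let Q be a fully separable state on ℂ^{n₁}⊗⋯⊗ℂ^{n_p}, and let S ⊆ {1,…,p} be a nonempty proper subset of the particle indices with f = min(Π_{α∈S} n_α, Π_{α∉S} n_α). Then there exists a pure state E on ℂ^N (namely the maximally entangled state across the bipartition determined by S) such that 0 ≤ Tr(QE) ≤ 1/f. -/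
open Matrix BigOperators ComplexOrder

noncomputable section

/-- A maximally entangled pure state across a bipartite system `m₁ × m₂`:
`|ψ⟩⟨ψ|` with `ψ = (1/√f) ∑_{j < f} u_j ⊗ w_j`, where `f = min (card m₁) (card m₂)` and
`u, w` enumerate orthonormal (standard) bases of the two factors. -/
def maxEntAcross (m₁ m₂ : Type*) [Fintype m₁] [Fintype m₂] :
    Matrix (m₁ × m₂) (m₁ × m₂) ℂ :=
  fun x y =>
    (if ((Fintype.equivFin m₁ x.1 : ℕ) = (Fintype.equivFin m₂ x.2 : ℕ) ∧
          (Fintype.equivFin m₁ x.1 : ℕ) < min (Fintype.card m₁) (Fintype.card m₂)) then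
        (((Real.sqrt (min (Fintype.card m₁) (Fintype.card m₂)) : ℝ) : ℂ))⁻¹ else 0) *
      star (if ((Fintype.equivFin m₁ y.1 : ℕ) = (Fintype.equivFin m₂ y.2 : ℕ) ∧
          (Fintype.equivFin m₁ y.1 : ℕ) < min (Fintype.card m₁) (Fintype.card m₂)) then
        (((Real.sqrt (min (Fintype.card m₁) (Fintype.card m₂)) : ℝ) : ℂ))⁻¹ else 0)

/-- The maximally entangled pure state across the bipartition of
`ℂ^{n₁} ⊗ ⋯ ⊗ ℂ^{n_p}` determined by `S`, viewed on the original (unpermuted) space. -/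
def maxEntBipartition {p : ℕ} (n : Fin p → ℕ) (S : Finset (Fin p)) :
    Matrix (∀ α, Fin (n α)) (∀ α, Fin (n α)) ℂ :=
  Matrix.reindex
    (Equiv.piEquivPiSubtypeProd (· ∈ S) fun α => Fin (n α)).symm
    (Equiv.piEquivPiSubtypeProd (· ∈ S) fun α => Fin (n α)).symm
    (maxEntAcross (∀ i : {x : Fin p // x ∈ S}, Fin (n i))
      (∀ i : {x : Fin p // ¬ x ∈ S}, Fin (n i)))

/-!
Regrouping the tensor factors along `S` turns every pure product state into a Kronecker product
`A ⊗ B` of two pure states, and the maximally entangled state into `|ψ⟩⟨ψ|` with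
`ψ = f^{-1/2} ∑_{j < f} u_j ⊗ w_j` for injective index maps `u`, `w`. Then
`⟨ψ, (A ⊗ B) ψ⟩ = f⁻¹ ∑_{j,k} A (u j) (u k) · B (w j) (w k)`, and since a pure state `A = A†A` has
`∑ |A x y|² = Tr A = 1`, the inequality `2|ab| ≤ |a|² + |b|²` bounds the double sum by `1`.
The value is nonnegative because pure states are positive semidefinite, and both bounds pass
to convex combinations.
-/

open scoped Kronecker

section Trace

variable {R m n : Type*} [Fintype m] [Fintype n]

theorem Matrix.trace_reindex_self [AddCommMonoid R] (e : m ≃ n) (M : Matrix m m R) :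
    (reindex e e M).trace = M.trace :=
  Equiv.sum_comp e.symm fun i => M i i

theorem Matrix.trace_mul_reindex_self [NonUnitalNonAssocSemiring R] (e : m ≃ n)
    (Q : Matrix n n R) (M : Matrix m m R) :
    (Q * reindex e e M).trace = (reindex e.symm e.symm Q * M).trace := by
  have h : Q * reindex e e M = reindex e e (reindex e.symm e.symm Q * M) := by
    simp only [reindex_apply, ← submatrix_mul_equiv _ _ _ e.symm, submatrix_submatrix,
      Equiv.symm_symm, Equiv.self_comp_symm, submatrix_id_id]
  rw [h, trace_reindex_self]

theorem Matrix.trace_mul_vecMulVec_star [CommSemiring R] [Star R] (Q : Matrix m m R)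
    (v : m → R) : (Q * vecMulVec v (star v)).trace = star v ⬝ᵥ Q *ᵥ v := by
  rw [mul_vecMulVec, trace_vecMulVec, dotProduct_comm]

end Trace

namespace IsPureState

variable {m n : Type*} [Fintype m] [Fintype n] {M : Matrix m m ℂ}

theorem posSemidef_s14 (h : IsPureState M) : M.PosSemidef := by
  have hM : M = Mᴴ * M := by rw [h.1.eq, h.2.1]
  rw [hM]
  exact posSemidef_conjTranspose_mul_self M

theorem sum_sum_norm_sq (h : IsPureState M) : ∑ x, ∑ y, ‖M x y‖ ^ 2 = 1 := by
  have htr : (Mᴴ * M).trace = 1 := by rw [h.1.eq, h.2.1, h.2.2]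
  simp only [trace, diag_apply, mul_apply, conjTranspose_apply, RCLike.star_def,
    Complex.conj_mul'] at htr
  rw [Finset.sum_comm]
  exact_mod_cast htr

theorem reindex (h : IsPureState M) (e : m ≃ n) : IsPureState (reindex e e M) :=
  ⟨h.1.submatrix _, by rw [reindex_apply, submatrix_mul_equiv, h.2.1],
    by rw [trace_reindex_self, h.2.2]⟩

theorem kronecker {A : Matrix m m ℂ} {B : Matrix n n ℂ} (hA : IsPureState A)
    (hB : IsPureState B) : IsPureState (A ⊗ₖ B) :=
  ⟨by rw [IsHermitian, conjTranspose_kronecker, hA.1.eq, hB.1.eq],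
    by rw [← mul_kronecker_mul, hA.2.1, hB.2.1],
    by rw [trace_kronecker, hA.2.2, hB.2.2, one_mul]⟩

end IsPureState

theorem isPureState_vecMulVec_star_s14 {m : Type*} [Fintype m] {v : m → ℂ}
    (hv : star v ⬝ᵥ v = 1) : IsPureState (vecMulVec v (star v)) :=
  ⟨by rw [IsHermitian, conjTranspose_vecMulVec, star_star],
    by rw [vecMulVec_mul_vecMulVec, hv, one_smul],
    by rw [trace_vecMulVec, dotProduct_comm, hv]⟩

namespace Matrix

variable {ι : Type*} [Fintype ι] {κ : ι → Type*}

def piKronecker (A : ∀ i, Matrix (κ i) (κ i) ℂ) : Matrix (∀ i, κ i) (∀ i, κ i) ℂ :=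
  fun j k => ∏ i, A i (j i) (k i)

theorem piKronecker_mul [DecidableEq ι] [∀ i, Fintype (κ i)] (A B : ∀ i, Matrix (κ i) (κ i) ℂ) :
    piKronecker A * piKronecker B = piKronecker fun i => A i * B i := by
  ext x y
  simp only [mul_apply, piKronecker, ← Finset.prod_mul_distrib]
  exact (Fintype.prod_sum fun i j => A i (x i) j * B i j (y i)).symm

theorem trace_piKronecker [DecidableEq ι] [∀ i, Fintype (κ i)] (A : ∀ i, Matrix (κ i) (κ i) ℂ) :
    (piKronecker A).trace = ∏ i, (A i).trace :=
  (Fintype.prod_sum fun i j => A i j j).symm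

theorem conjTranspose_piKronecker (A : ∀ i, Matrix (κ i) (κ i) ℂ) :
    (piKronecker A)ᴴ = piKronecker fun i => (A i)ᴴ := by
  ext x y
  simp only [conjTranspose_apply, piKronecker, star_prod]

theorem reindex_piKronecker (P : ι → Prop) [DecidablePred P] [Fintype {i // P i}]
    [Fintype {i // ¬P i}] (A : ∀ i, Matrix (κ i) (κ i) ℂ) :
    reindex (Equiv.piEquivPiSubtypeProd P κ) (Equiv.piEquivPiSubtypeProd P κ) (piKronecker A) =
      piKronecker (fun i : {i // P i} => A i) ⊗ₖ piKronecker fun i : {i // ¬P i} => A i := by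
  ext x y
  simp only [reindex_apply, submatrix_apply, kroneckerMap_apply, piKronecker]
  convert (Fintype.prod_subtype_mul_prod_subtype P _).symm using 2 <;>
    refine Finset.prod_congr (by congr!) fun i _ => ?_ <;> simp [Equiv.piEquivPiSubtypeProd, i.2]

end Matrix

theorem IsPureState.piKronecker {ι : Type*} [Fintype ι] [DecidableEq ι] {κ : ι → Type*}
    [∀ i, Fintype (κ i)] {A : ∀ i, Matrix (κ i) (κ i) ℂ} (hA : ∀ i, IsPureState (A i)) :
    IsPureState (piKronecker A) :=
  ⟨by rw [IsHermitian, conjTranspose_piKronecker]; simp_rw [fun i => (hA i).1.eq],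
    by rw [piKronecker_mul]; simp_rw [fun i => (hA i).2.1],
    by rw [trace_piKronecker]; simp [fun i => (hA i).2.2]⟩

theorem IsPureProductState.isPureProductState2_reindex {p : ℕ} {n : Fin p → ℕ}
    {M : Matrix (∀ α, Fin (n α)) (∀ α, Fin (n α)) ℂ} (hM : IsPureProductState M)
    (S : Finset (Fin p)) :
    IsPureProductState2 (reindex (Equiv.piEquivPiSubtypeProd (· ∈ S) fun α => Fin (n α))
      (Equiv.piEquivPiSubtypeProd (· ∈ S) fun α => Fin (n α)) M) := by
  obtain ⟨A, hA, rfl⟩ := hM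
  exact ⟨_, _, .piKronecker fun i => hA i, .piKronecker fun i => hA i, reindex_piKronecker _ A⟩

theorem IsSeparableState.isSeparable2_reindex {p : ℕ} {n : Fin p → ℕ}
    {Q : Matrix (∀ α, Fin (n α)) (∀ α, Fin (n α)) ℂ} (hQ : IsSeparableState Q)
    (S : Finset (Fin p)) :
    IsSeparable2 (reindex (Equiv.piEquivPiSubtypeProd (· ∈ S) fun α => Fin (n α))
      (Equiv.piEquivPiSubtypeProd (· ∈ S) fun α => Fin (n α)) Q) := by
  obtain ⟨k, c, M, hc, hc1, hM, rfl⟩ := hQ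
  refine ⟨k, c, fun i => reindex _ _ (M i), hc, hc1,
    fun i => (hM i).isPureProductState2_reindex S, ?_⟩
  ext x y
  simp only [reindex_apply, submatrix_apply, Matrix.sum_apply, Matrix.smul_apply]

theorem Function.Injective.sum_comp_le {ι κ M : Type*} [Fintype ι] [Fintype κ]
    [AddCommMonoid M] [PartialOrder M] [IsOrderedAddMonoid M] {u : ι → κ} (hu : u.Injective)
    {g : κ → M} (hg : ∀ x, 0 ≤ g x) : ∑ i, g (u i) ≤ ∑ x, g x := by
  classical
  rw [← Finset.sum_image fun i _ j _ h => hu h]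
  exact Finset.sum_le_sum_of_subset_of_nonneg (Finset.subset_univ _) fun x _ _ => hg x

theorem Function.Injective.sum_sum_comp_le {ι κ M : Type*} [Fintype ι] [Fintype κ]
    [AddCommMonoid M] [PartialOrder M] [IsOrderedAddMonoid M] {u : ι → κ} (hu : u.Injective)
    {g : κ → κ → M} (hg : ∀ x y, 0 ≤ g x y) : ∑ i, ∑ j, g (u i) (u j) ≤ ∑ x, ∑ y, g x y :=
  calc ∑ i, ∑ j, g (u i) (u j) ≤ ∑ i, ∑ y, g (u i) y :=
        Finset.sum_le_sum fun _ _ => hu.sum_comp_le (hg _)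
    _ ≤ ∑ x, ∑ y, g x y := hu.sum_comp_le fun x => Finset.sum_nonneg fun y _ => hg x y

theorem Complex.le_ofReal_of_nonneg_of_norm_le {z : ℂ} {r : ℝ} (hz : 0 ≤ z) (h : ‖z‖ ≤ r) :
    z ≤ r := by
  rw [eq_coe_norm_of_nonneg hz]
  exact real_le_real.mpr h

theorem IsPureState.norm_sum_sum_mul_le_one {ι m n : Type*} [Fintype ι] [Fintype m] [Fintype n]
    {A : Matrix m m ℂ} {B : Matrix n n ℂ} (hA : IsPureState A) (hB : IsPureState B)
    {u : ι → m} {w : ι → n} (hu : u.Injective) (hw : w.Injective) :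
    ‖∑ j, ∑ k, A (u j) (u k) * B (w j) (w k)‖ ≤ 1 := by
  have hA' : ∑ j, ∑ k, ‖A (u j) (u k)‖ ^ 2 ≤ 1 :=
    (hu.sum_sum_comp_le (g := fun x y => ‖A x y‖ ^ 2) fun _ _ => by positivity).trans_eq
      hA.sum_sum_norm_sq
  have hB' : ∑ j, ∑ k, ‖B (w j) (w k)‖ ^ 2 ≤ 1 :=
    (hw.sum_sum_comp_le (g := fun x y => ‖B x y‖ ^ 2) fun _ _ => by positivity).trans_eq
      hB.sum_sum_norm_sq
  calc ‖∑ j, ∑ k, A (u j) (u k) * B (w j) (w k)‖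
      ≤ ∑ j, ∑ k, ‖A (u j) (u k)‖ * ‖B (w j) (w k)‖ :=
        (norm_sum_le _ _).trans <| Finset.sum_le_sum fun j _ =>
          (norm_sum_le _ _).trans_eq <| Finset.sum_congr rfl fun k _ => norm_mul _ _
    _ ≤ ∑ j, ∑ k, (‖A (u j) (u k)‖ ^ 2 + ‖B (w j) (w k)‖ ^ 2) / 2 := by
        gcongr with j _ k _
        linarith [two_mul_le_add_sq ‖A (u j) (u k)‖ ‖B (w j) (w k)‖]
    _ = (∑ j, ∑ k, ‖A (u j) (u k)‖ ^ 2 + ∑ j, ∑ k, ‖B (w j) (w k)‖ ^ 2) / 2 := by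
        simp only [← Finset.sum_div, ← Finset.sum_add_distrib]
    _ ≤ 1 := by linarith

section MaxEnt

open Fintype

variable (m₁ m₂ : Type*) [Fintype m₁] [Fintype m₂]

/-- The pairs `(u j, w j)` of the Schmidt decomposition `ψ = f^{-1/2} ∑ j, u j ⊗ w j`. -/
@[simps]
def maxEntIndex : Fin (min (card m₁) (card m₂)) ↪ m₁ × m₂ where
  toFun j := ((equivFin m₁).symm (j.castLE (min_le_left _ _)),
    (equivFin m₂).symm (j.castLE (min_le_right _ _)))
  inj' _ _ h := Fin.castLE_injective _ ((equivFin m₁).symm.injective (congrArg Prod.fst h))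

def maxEntVec : m₁ × m₂ → ℂ := fun x =>
  if ((equivFin m₁ x.1 : ℕ) = (equivFin m₂ x.2 : ℕ) ∧
      (equivFin m₁ x.1 : ℕ) < min (card m₁) (card m₂)) then
    (((Real.sqrt (min (card m₁) (card m₂)) : ℝ) : ℂ))⁻¹ else 0

theorem maxEntAcross_eq_vecMulVec :
    maxEntAcross m₁ m₂ = vecMulVec (maxEntVec m₁ m₂) (star (maxEntVec m₁ m₂)) :=
  rfl

variable {m₁ m₂}

theorem injective_fst_maxEntIndex : (fun j => (maxEntIndex m₁ m₂ j).1).Injective :=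
  fun _ _ h => Fin.castLE_injective _ ((equivFin m₁).symm.injective h)

theorem injective_snd_maxEntIndex : (fun j => (maxEntIndex m₁ m₂ j).2).Injective :=
  fun _ _ h => Fin.castLE_injective _ ((equivFin m₂).symm.injective h)

theorem maxEntVec_maxEntIndex (j : Fin (min (card m₁) (card m₂))) :
    maxEntVec m₁ m₂ (maxEntIndex m₁ m₂ j) = ((Real.sqrt (min (card m₁ : ℝ) (card m₂)) : ℂ))⁻¹ :=
  if_pos ⟨by simp, by simpa using j.isLt⟩

theorem maxEntVec_eq_zero {x : m₁ × m₂} (hx : x ∉ Set.range (maxEntIndex m₁ m₂)) :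
    maxEntVec m₁ m₂ x = 0 := by
  refine if_neg fun ⟨hx₁, hx₂⟩ => hx ⟨⟨_, hx₂⟩, Prod.ext ?_ ?_⟩
  · simp
  · simp [hx₁]

theorem star_maxEntVec : star (maxEntVec m₁ m₂) = maxEntVec m₁ m₂ := by
  funext x
  simp only [Pi.star_apply, maxEntVec, apply_ite star, star_zero, star_inv₀, Complex.star_def,
    Complex.conj_ofReal]

theorem sum_maxEntVec_mul (g : m₁ × m₂ → ℂ) :
    ∑ x, maxEntVec m₁ m₂ x * g x =
      ((Real.sqrt (min (card m₁ : ℝ) (card m₂)) : ℂ))⁻¹ * ∑ j, g (maxEntIndex m₁ m₂ j) := by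
  rw [← Finset.sum_subset (Finset.subset_univ (Finset.univ.map (maxEntIndex m₁ m₂)))
    fun x _ hx => by rw [maxEntVec_eq_zero (by simpa using hx), zero_mul], Finset.sum_map,
    Finset.mul_sum]
  simp only [maxEntVec_maxEntIndex]

theorem star_maxEntVec_dotProduct_mulVec (M : Matrix (m₁ × m₂) (m₁ × m₂) ℂ) :
    star (maxEntVec m₁ m₂) ⬝ᵥ M *ᵥ maxEntVec m₁ m₂ =
      ((min (card m₁) (card m₂) : ℕ) : ℂ)⁻¹ *
        ∑ j, ∑ k, M (maxEntIndex m₁ m₂ j) (maxEntIndex m₁ m₂ k) := by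
  have hsq : ((Real.sqrt (min (card m₁ : ℝ) (card m₂)) : ℂ))⁻¹ ^ 2 =
      ((min (card m₁) (card m₂) : ℕ) : ℂ)⁻¹ := by
    rw [inv_pow, ← Complex.ofReal_pow, Real.sq_sqrt (by positivity), ← Nat.cast_min,
      Complex.ofReal_natCast]
  have hrow : ∀ x, (M *ᵥ maxEntVec m₁ m₂) x =
      ((Real.sqrt (min (card m₁ : ℝ) (card m₂)) : ℂ))⁻¹ * ∑ k, M x (maxEntIndex m₁ m₂ k) := by
    intro x
    simp only [mulVec, dotProduct, mul_comm (M x _)]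
    exact sum_maxEntVec_mul _
  rw [star_maxEntVec, dotProduct, sum_maxEntVec_mul]
  simp only [hrow]
  rw [← Finset.mul_sum, ← mul_assoc, ← sq, hsq]

theorem star_maxEntVec_dotProduct_self [Nonempty m₁] [Nonempty m₂] :
    star (maxEntVec m₁ m₂) ⬝ᵥ maxEntVec m₁ m₂ = 1 := by
  classical
  have hpos : 0 < min (card m₁) (card m₂) := lt_min card_pos card_pos
  have h := star_maxEntVec_dotProduct_mulVec (m₁ := m₁) (m₂ := m₂) 1
  rw [one_mulVec] at h
  rw [h]
  simp only [one_apply, (maxEntIndex m₁ m₂).injective.eq_iff, Finset.sum_ite_eq,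
    Finset.mem_univ, if_true, Finset.sum_const, Finset.card_univ, Fintype.card_fin, nsmul_eq_mul,
    mul_one]
  exact inv_mul_cancel₀ (Nat.cast_ne_zero.mpr hpos.ne')

theorem isPureState_maxEntAcross [Nonempty m₁] [Nonempty m₂] :
    IsPureState (maxEntAcross m₁ m₂) :=
  maxEntAcross_eq_vecMulVec m₁ m₂ ▸ isPureState_vecMulVec_star_s14 star_maxEntVec_dotProduct_self

theorem IsPureProductState2.star_maxEntVec_dotProduct_mulVec_mem_Icc
    {P : Matrix (m₁ × m₂) (m₁ × m₂) ℂ} (hP : IsPureProductState2 P) :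
    star (maxEntVec m₁ m₂) ⬝ᵥ P *ᵥ maxEntVec m₁ m₂ ∈
      Set.Icc 0 ((min (card m₁) (card m₂) : ℕ) : ℂ)⁻¹ := by
  obtain ⟨A, B, hA, hB, rfl⟩ := hP
  have hnonneg := (hA.kronecker hB).posSemidef_s14.dotProduct_mulVec_nonneg (maxEntVec m₁ m₂)
  refine ⟨hnonneg, ?_⟩
  have hnorm := hA.norm_sum_sum_mul_le_one hB injective_fst_maxEntIndex injective_snd_maxEntIndex
  rw [show ((min (card m₁) (card m₂) : ℕ) : ℂ)⁻¹ = (((min (card m₁) (card m₂) : ℕ) : ℝ)⁻¹ : ℝ)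
    by rw [Complex.ofReal_inv, Complex.ofReal_natCast]]
  refine Complex.le_ofReal_of_nonneg_of_norm_le hnonneg ?_
  rw [star_maxEntVec_dotProduct_mulVec, norm_mul, norm_inv, Complex.norm_natCast]
  exact mul_le_of_le_one_right (by positivity) hnorm

end MaxEnt

theorem IsSeparable2.trace_mul_maxEntAcross_mem_Icc {m₁ m₂ : Type*} [Fintype m₁] [Fintype m₂]
    {Q : Matrix (m₁ × m₂) (m₁ × m₂) ℂ} (hQ : IsSeparable2 Q) :
    (Q * maxEntAcross m₁ m₂).trace ∈
      Set.Icc 0 ((min (Fintype.card m₁) (Fintype.card m₂) : ℕ) : ℂ)⁻¹ := by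
  obtain ⟨k, c, P, hc, hc1, hP, rfl⟩ := hQ
  have hc' : ∀ i, (0 : ℂ) ≤ c i := fun i => Complex.zero_le_real.mpr (hc i)
  have hbounds := fun i => (hP i).star_maxEntVec_dotProduct_mulVec_mem_Icc
  rw [maxEntAcross_eq_vecMulVec, trace_mul_vecMulVec_star, sum_mulVec, dotProduct_sum]
  simp only [smul_mulVec, dotProduct_smul, smul_eq_mul]
  refine ⟨Finset.sum_nonneg fun i _ => mul_nonneg (hc' i) (hbounds i).1, ?_⟩
  calc _ ≤ ∑ i, (c i : ℂ) * ((min (Fintype.card m₁) (Fintype.card m₂) : ℕ) : ℂ)⁻¹ :=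
        Finset.sum_le_sum fun i _ => mul_le_mul_of_nonneg_left (hbounds i).2 (hc' i)
    _ = _ := by rw [← Finset.sum_mul, ← Complex.ofReal_sum, hc1, Complex.ofReal_one, one_mul]

theorem fullySeparable_trace_maxEntBipartition_general {p : ℕ}
    (n : Fin p → ℕ) (hn : ∀ α, 2 ≤ n α)
    (Q : Matrix (∀ α, Fin (n α)) (∀ α, Fin (n α)) ℂ) (hQ : IsSeparableState Q)
    (S : Finset (Fin p)) :
    IsPureState (maxEntBipartition n S) ∧
      0 ≤ (Q * maxEntBipartition n S).trace ∧
      (Q * maxEntBipartition n S).trace ≤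
        (((min (∏ α ∈ S, n α) (∏ α ∈ Sᶜ, n α) : ℕ) : ℂ))⁻¹ := by
  have : Nonempty (∀ i : {α // α ∈ S}, Fin (n i)) := ⟨fun i => ⟨0, by linarith [hn i]⟩⟩
  have : Nonempty (∀ i : {α // α ∉ S}, Fin (n i)) := ⟨fun i => ⟨0, by linarith [hn i]⟩⟩
  have hcard : min (∏ α ∈ S, n α) (∏ α ∈ Sᶜ, n α) =
      min (Fintype.card (∀ i : {α // α ∈ S}, Fin (n i)))
        (Fintype.card (∀ i : {α // α ∉ S}, Fin (n i))) := by
    simp only [Fintype.card_pi, Fintype.card_fin, Finset.prod_subtype S (fun _ => Iff.rfl) n,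
      Finset.prod_subtype Sᶜ (fun _ => Finset.mem_compl) n]
  obtain ⟨hpos, hle⟩ := (hQ.isSeparable2_reindex S).trace_mul_maxEntAcross_mem_Icc
  rw [hcard, maxEntBipartition, trace_mul_reindex_self]
  exact ⟨isPureState_maxEntAcross.reindex _, hpos, hle⟩

/-- Let `Q` be a fully separable state on `ℂ^{n₁} ⊗ ⋯ ⊗ ℂ^{n_p}`,
let `S` be a nonempty proper subset of the particle indices, and
`f = min (∏_{α ∈ S} n α) (∏_{α ∉ S} n α)`.  Then there is a pure state `E` on `ℂ^N` —
namely the maximally entangled state across the bipartition determined by `S` — with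
`0 ≤ Tr(QE) ≤ 1/f` (in the complex order). -/
theorem fullySeparable_trace_maxEntBipartition {p : ℕ} (hp : 2 ≤ p)
    (n : Fin p → ℕ) (hn : ∀ α, 2 ≤ n α)
    (Q : Matrix (∀ α, Fin (n α)) (∀ α, Fin (n α)) ℂ) (hQ : IsSeparableState Q)
    (S : Finset (Fin p)) (hS : S.Nonempty) (hS' : S ≠ Finset.univ) :
    IsPureState (maxEntBipartition n S) ∧
      0 ≤ (Q * maxEntBipartition n S).trace ∧
      (Q * maxEntBipartition n S).trace ≤
        (((min (∏ α ∈ S, n α) (∏ α ∈ Sᶜ, n α) : ℕ) : ℂ))⁻¹ :=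
  fullySeparable_trace_maxEntBipartition_general n hn Q hQ S
end
end
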